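/- arXiv:2510.25275 — 5 statements merged into one kernel-verified Lean document; each statement's English description precedes it below -/
import Mathlib

section
/- An index satisfies additivity and pairwise homogeneity if and only if it is a weighted index. -/
open Finset

/-- A popularity index assigns, to every streaming problem `(N, M, t)`
(artists `N`, users `M`, stream matrix `t`), a real value for each artist. -/
abbrev SIndex : Type := Finset ℕ → Finset ℕ → (ℕ → ℕ → ℕ) → ℕ → ℝ

/-- `(N, M, t)` is a streaming problem: `N` (artists) and `M` (users) are nonempty
finite sets and every user has streamed some content. -/
def IsProblem (N M : Finset ℕ) (t : ℕ → ℕ → ℕ) : Prop :=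
  N.Nonempty ∧ M.Nonempty ∧ ∀ j ∈ M, 0 < ∑ i ∈ N, t i j

/-- `I` is an index: nonnegative values with positive total, on every problem. -/
def IsIndex (I : SIndex) : Prop :=
  ∀ N M t, IsProblem N M t →
    (∀ i ∈ N, 0 ≤ I N M t i) ∧ 0 < ∑ i ∈ N, I N M t i

/-- Additivity: if `M` splits into disjoint `M₁, M₂` and `t` agrees with
`t₁` on the columns of `M₁` and with `t₂` on the columns of `M₂`, then the
index is the sum of the indices of the two subproblems. -/
def AdditiveIndex (I : SIndex) : Prop :=
  ∀ N M M₁ M₂ (t t₁ t₂ : ℕ → ℕ → ℕ),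
    IsProblem N M t → IsProblem N M₁ t₁ → IsProblem N M₂ t₂ →
    M = M₁ ∪ M₂ → Disjoint M₁ M₂ →
    (∀ i ∈ N, ∀ j ∈ M₁, t i j = t₁ i j) →
    (∀ i ∈ N, ∀ j ∈ M₂, t i j = t₂ i j) →
    ∀ i ∈ N, I N M t i = I N M₁ t₁ i + I N M₂ t₂ i

/-- Null artists: an artist with no streams gets importance zero. -/
def NullArtists (I : SIndex) : Prop :=
  ∀ N M t, IsProblem N M t → ∀ i ∈ N, (∑ j ∈ M, t i j) = 0 → I N M t i = 0

/-- Pairwise homogeneity. -/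
def PairwiseHomogeneous (I : SIndex) : Prop :=
  ∀ N M t, IsProblem N M t → ∀ i ∈ N, ∀ i' ∈ N, ∀ lam : ℝ, 0 ≤ lam →
    (∀ j ∈ M, (t i j : ℝ) = lam * (t i' j : ℝ)) →
    I N M t i = lam * I N M t i'

/-- Equal individual impact of similar users (removing either of two users with
the same streams on artist `i` has the same effect on `i`'s index). -/
def EqualIndividualImpact (I : SIndex) : Prop :=
  ∀ N M t, IsProblem N M t → 2 ≤ M.card →
    ∀ i ∈ N, ∀ j ∈ M, ∀ j' ∈ M, t i j = t i j' →
      I N (M.erase j) t i = I N (M.erase j') t i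

/-- Equal global impact of users. -/
def EqualGlobalImpact (I : SIndex) : Prop :=
  ∀ N M t, IsProblem N M t → 2 ≤ M.card →
    ∀ j ∈ M, ∀ j' ∈ M,
      ∑ i ∈ N, I N (M.erase j) t i = ∑ i ∈ N, I N (M.erase j') t i

/-- Equal impact of artists (for pairs whose removal still leaves a streaming problem). -/
def EqualArtistImpact (I : SIndex) : Prop :=
  ∀ N M t, IsProblem N M t → 2 ≤ N.card →
    ∀ i ∈ N, ∀ i' ∈ N,
      IsProblem (N.erase i) M t → IsProblem (N.erase i') M t →
      I N M t i - I (N.erase i') M t i = I N M t i' - I (N.erase i) M t i'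

/-- The streaming profile of user `j`, viewed as a stream vector over `N`
(zero outside `N`). -/
def prof (N : Finset ℕ) (t : ℕ → ℕ → ℕ) (j : ℕ) : ℕ → ℕ :=
  fun i => if i ∈ N then t i j else 0

/-- `x` is a stream vector over `N`: it vanishes outside `N`. -/
def PadVec (N : Finset ℕ) (x : ℕ → ℕ) : Prop := ∀ i, i ∉ N → x i = 0

/-- A weight system: a positive weight for each user and each stream vector over each `N`. -/
def IsWeightSystem (ω : Finset ℕ → ℕ → (ℕ → ℕ) → ℝ) : Prop :=
  ∀ N (j : ℕ) x, PadVec N x → 0 < ω N j x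

/-- `I` is a weighted index. -/
def IsWeightedIndex (I : SIndex) : Prop :=
  ∃ ω, IsWeightSystem ω ∧
    ∀ N M t, IsProblem N M t → ∀ i ∈ N,
      I N M t i = ∑ j ∈ M, ω N j (prof N t j) * (t i j : ℝ)

/-- A decomposition function `d N i j x` (artist `i`, user `j`, stream vector `x` over `N`). -/
abbrev DFun : Type := Finset ℕ → ℕ → ℕ → (ℕ → ℕ) → ℝ

/-- `d` is a genuine decomposition function: nonnegative, and zero on artists with
no streams in the vector. -/
def IsDecompFn (d : DFun) : Prop :=
  (∀ N, ∀ i ∈ N, ∀ (j : ℕ) x, PadVec N x → 0 ≤ d N i j x) ∧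
  (∀ N, ∀ i ∈ N, ∀ (j : ℕ) x, PadVec N x → x i = 0 → d N i j x = 0)

/-- `d` decomposes the index `I`. -/
def Decomposes (d : DFun) (I : SIndex) : Prop :=
  ∀ N M t, IsProblem N M t → ∀ i ∈ N,
    I N M t i = ∑ j ∈ M, d N i j (prof N t j)

/-- `I` is a decomposable index. -/
def IsDecomposable (I : SIndex) : Prop :=
  IsIndex I ∧ ∃ d, IsDecompFn d ∧ Decomposes d I

/-- A decomposition function is user independent if `d N i j x` only depends on `x i`. -/
def UserIndependent (d : DFun) : Prop :=
  ∀ N, ∀ i ∈ N, ∀ (j j' : ℕ) x x', PadVec N x → PadVec N x' →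
    x i = x' i → d N i j x = d N i j' x'

/-- A decomposition function is aggregate invariant if the total importance granted
by any (nonzero) stream vector of any user is constant. -/
def AggregateInvariant (d : DFun) : Prop :=
  ∀ N (j j' : ℕ) x x', PadVec N x → PadVec N x' →
    (∃ i ∈ N, 0 < x i) → (∃ i ∈ N, 0 < x' i) →
    ∑ i ∈ N, d N i j x = ∑ i ∈ N, d N i j' x'

/-- The Shapley value of the TU game `v` with player set `N`. -/
noncomputable def shapleyValue (N : Finset ℕ) (v : Finset ℕ → ℝ) (i : ℕ) : ℝ :=
  ∑ S ∈ (N.erase i).powerset,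
    ((S.card.factorial * (N.card - S.card - 1).factorial : ℕ) : ℝ) / ((N.card.factorial : ℕ) : ℝ)
      * (v (insert i S) - v S)

/-- The artists of `N` streamed by the vector `x`. -/
def suppOn (N : Finset ℕ) (x : ℕ → ℕ) : Finset ℕ := N.filter (fun i => 0 < x i)

/-- Restriction (with zero padding) of a stream vector to `A`. -/
def padTo (A : Finset ℕ) (x : ℕ → ℕ) : ℕ → ℕ := fun i => if i ∈ A then x i else 0

/-- `d` is Shapley induced: there is a family of TU games, coherent under restriction
to streamed artists, whose Shapley values yield `d`. -/
def ShapleyInduced (d : DFun) : Prop :=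
  ∃ V : Finset ℕ → ℕ → (ℕ → ℕ) → Finset ℕ → ℝ,
    (∀ N (j : ℕ) x, V N j x ∅ = 0) ∧
    (∀ N (j : ℕ) x, PadVec N x → ∀ S ⊆ N,
      V N j x S = V (S ∩ suppOn N x) j (padTo (S ∩ suppOn N x) x) (S ∩ suppOn N x)) ∧
    (∀ N (j : ℕ) x, PadVec N x → ∀ i ∈ N, d N i j x = shapleyValue N (V N j x) i)

/-- The pro-rata index. -/
noncomputable def proRata : SIndex := fun _N M t i => ∑ j ∈ M, (t i j : ℝ)

/-- The user-centric index. -/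
noncomputable def userCentric : SIndex := fun N M t i =>
  ∑ j ∈ M, (t i j : ℝ) / (∑ i' ∈ N, (t i' j : ℝ))

/-- The Shapley index. -/
noncomputable def shapleyIndex : SIndex := fun N M t i =>
  ∑ j ∈ M, if 0 < t i j then ((N.filter fun i' => 0 < t i' j).card : ℝ)⁻¹ else 0

/-- The equal-division index. -/
noncomputable def equalDivision : SIndex := fun N M _t _i => (M.card : ℝ) / (N.card : ℝ)

/-- Candidate weight system extracted from an index `I`. -/
noncomputable def myOmega (I : SIndex) : Finset ℕ → ℕ → (ℕ → ℕ) → ℝ :=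
  fun N j x =>
    if 0 < ∑ i ∈ N, x i then
      (∑ i ∈ N, I N {j} (fun i _ => x i) i) / (∑ i ∈ N, (x i : ℝ))
    else 1

/-- For an additive index, a one-user problem's value only depends on that user's column
restricted to `N`. -/
lemma col_indep {I : SIndex} (hAdd : AdditiveIndex I) {N : Finset ℕ} {j : ℕ}
    {t t' : ℕ → ℕ → ℕ} (hP : IsProblem N {j} t) (hP' : IsProblem N {j} t')
    (hagree : ∀ i ∈ N, t i j = t' i j) :
    ∀ i ∈ N, I N {j} t i = I N {j} t' i := by
  intro i hi
  set k := j + 1 with hk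
  have hkj : k ≠ j := by omega
  set s : ℕ → ℕ → ℕ := fun i m => if m = j then t i j else 1 with hs
  obtain ⟨hN, -, hpos⟩ := hP
  have hPk : IsProblem N {k} s := by
    refine ⟨hN, ⟨k, mem_singleton_self k⟩, ?_⟩
    intro j' hj'
    rw [mem_singleton] at hj'
    subst hj'
    have : ∑ i ∈ N, s i k = ∑ i ∈ N, 1 := by
      apply Finset.sum_congr rfl
      intro i' _
      simp [hs, hkj]
    rw [this, Finset.sum_const, smul_eq_mul, mul_one]
    exact Finset.card_pos.mpr hN
  have hPs : IsProblem N {j, k} s := by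
    refine ⟨hN, ⟨j, by simp⟩, ?_⟩
    intro j' hj'
    rw [mem_insert, mem_singleton] at hj'
    rcases hj' with h | h
    · have : ∑ i ∈ N, s i j' = ∑ i ∈ N, t i j := by
        apply Finset.sum_congr rfl; intro i' _; simp [hs, h]
      rw [this]
      exact hpos j (mem_singleton_self j)
    · rw [h]
      exact hPk.2.2 k (mem_singleton_self k)
  have hsplit : ({j, k} : Finset ℕ) = {j} ∪ {k} := by
    ext m; simp
  have hdisj : Disjoint ({j} : Finset ℕ) ({k} : Finset ℕ) := by
    simp [hkj.symm]
  have h1 := hAdd N {j, k} {j} {k} s t s hPs ⟨hN, ⟨j, mem_singleton_self j⟩, hpos⟩ hPk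
    hsplit hdisj
    (by intro i' _ j' hj'; rw [mem_singleton] at hj'; simp [hs, hj'])
    (by intro i' _ j' _; rfl) i hi
  have h2 := hAdd N {j, k} {j} {k} s t' s hPs hP' hPk
    hsplit hdisj
    (by intro i' hi' j' hj'; rw [mem_singleton] at hj'; subst hj'
        simp only [hs, if_pos rfl]; exact hagree i' hi')
    (by intro i' _ j' _; rfl) i hi
  linarith

/-- Formula for one-user problems. -/
lemma single_formula {I : SIndex} (hI : IsIndex I) (hAdd : AdditiveIndex I)
    (hHom : PairwiseHomogeneous I) {N : Finset ℕ} {j : ℕ} {t : ℕ → ℕ → ℕ}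
    (hP : IsProblem N {j} t) :
    ∀ i ∈ N, I N {j} t i = myOmega I N j (prof N t j) * (t i j : ℝ) := by
  intro i hi
  have hN := hP.1
  have hposj : 0 < ∑ i' ∈ N, t i' j := hP.2.2 j (mem_singleton_self j)
  have hxN : ∀ i' ∈ N, prof N t j i' = t i' j := fun i' hi' => if_pos hi'
  have hsx : ∑ i' ∈ N, prof N t j i' = ∑ i' ∈ N, t i' j := Finset.sum_congr rfl hxN
  set c : ℕ → ℕ → ℕ := fun i' _ => prof N t j i' with hc
  have hPc : IsProblem N {j} c := by
    refine ⟨hN, ⟨j, mem_singleton_self j⟩, ?_⟩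
    intro j' _
    show 0 < ∑ i' ∈ N, prof N t j i'
    rw [hsx]; exact hposj
  obtain ⟨i₀, hi₀, hti₀⟩ : ∃ i₀ ∈ N, 0 < t i₀ j := by
    by_contra h
    push_neg at h
    have : ∑ i' ∈ N, t i' j = 0 :=
      Finset.sum_eq_zero (fun i' hi' => Nat.le_zero.mp (h i' hi'))
    omega
  have hb : (0:ℝ) < (t i₀ j : ℝ) := by exact_mod_cast hti₀
  have hprop : ∀ i' ∈ N, I N {j} c i' = ((t i' j : ℝ) / (t i₀ j : ℝ)) * I N {j} c i₀ := by
    intro i' hi'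
    refine hHom N {j} c hPc i' hi' i₀ hi₀ _
      (div_nonneg (Nat.cast_nonneg _) (Nat.cast_nonneg _)) ?_
    intro j' _
    show ((prof N t j i' : ℕ) : ℝ) = _ * ((prof N t j i₀ : ℕ) : ℝ)
    rw [hxN i' hi', hxN i₀ hi₀, div_mul_cancel₀ _ hb.ne']
  have hsum : ∑ i' ∈ N, I N {j} c i' =
      ((∑ i' ∈ N, (t i' j : ℝ)) / (t i₀ j : ℝ)) * I N {j} c i₀ := by
    rw [Finset.sum_congr rfl hprop, ← Finset.sum_mul, ← Finset.sum_div]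
  have hS : (0:ℝ) < ∑ i' ∈ N, (t i' j : ℝ) := by
    have : ((∑ i' ∈ N, t i' j : ℕ) : ℝ) = ∑ i' ∈ N, (t i' j : ℝ) := by push_cast; rfl
    rw [← this]; exact_mod_cast hposj
  have hcol := col_indep hAdd hP hPc (fun i' hi' => (hxN i' hi').symm) i hi
  rw [hcol, myOmega]
  have hpx : 0 < ∑ i' ∈ N, prof N t j i' := by rw [hsx]; exact hposj
  rw [if_pos hpx]
  have hden : ∑ i' ∈ N, ((prof N t j i' : ℕ) : ℝ) = ∑ i' ∈ N, (t i' j : ℝ) := by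
    apply Finset.sum_congr rfl
    intro i' hi'
    rw [hxN i' hi']
  show I N {j} c i = (∑ i' ∈ N, I N {j} c i') / (∑ i' ∈ N, ((prof N t j i' : ℕ) : ℝ)) * (t i j : ℝ)
  rw [hden, hsum, hprop i hi]
  field_simp

/-- Main formula: the index of any problem is given by `myOmega`-weighted sums. -/
lemma main_formula {I : SIndex} (hI : IsIndex I) (hAdd : AdditiveIndex I)
    (hHom : PairwiseHomogeneous I) (N : Finset ℕ) (M : Finset ℕ) :
    ∀ t, IsProblem N M t → ∀ i ∈ N,
      I N M t i = ∑ j ∈ M, myOmega I N j (prof N t j) * (t i j : ℝ) := by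
  induction M using Finset.strongInduction with
  | _ M ih =>
    intro t hP i hi
    have hN := hP.1
    obtain ⟨j, hj⟩ := hP.2.1
    have hpos := hP.2.2
    have hP1 : IsProblem N {j} t := by
      refine ⟨hN, ⟨j, mem_singleton_self j⟩, ?_⟩
      intro j' hj'
      rw [mem_singleton] at hj'
      rw [hj']
      exact hpos j hj
    by_cases hM : M = {j}
    · subst hM
      rw [Finset.sum_singleton]
      exact single_formula hI hAdd hHom hP1 i hi
    · have hne : (M.erase j).Nonempty := by
        rw [Finset.nonempty_iff_ne_empty]
        intro h
        rcases (Finset.erase_eq_empty_iff M j).mp h with h' | h'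
        · exact absurd h' (Finset.nonempty_iff_ne_empty.mp ⟨j, hj⟩)
        · exact hM h'
      have hP2 : IsProblem N (M.erase j) t :=
        ⟨hN, hne, fun j' hj' => hpos j' (Finset.mem_of_mem_erase hj')⟩
      have hsplit : M = {j} ∪ M.erase j := by
        have h' := Finset.insert_erase hj
        rw [Finset.insert_eq] at h'
        exact h'.symm
      have hdisj : Disjoint ({j} : Finset ℕ) (M.erase j) :=
        Finset.disjoint_singleton_left.mpr (Finset.notMem_erase j M)
      have hadd := hAdd N M {j} (M.erase j) t t t hP hP1 hP2 hsplit hdisj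
        (fun _ _ _ _ => rfl) (fun _ _ _ _ => rfl) i hi
      rw [hadd, single_formula hI hAdd hHom hP1 i hi,
        ih (M.erase j) (Finset.erase_ssubset hj) t hP2 i hi,
        ← Finset.add_sum_erase M _ hj]

/-- An index satisfies additivity and pairwise homogeneity if and only if
it is a weighted index. -/
theorem statement0 (I : SIndex) (hI : IsIndex I) :
    (AdditiveIndex I ∧ PairwiseHomogeneous I) ↔ IsWeightedIndex I := by
  constructor
  · rintro ⟨hAdd, hHom⟩
    refine ⟨myOmega I, ?_, ?_⟩
    · intro N j x _
      unfold myOmega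
      split_ifs with h
      · apply div_pos
        · have hN : N.Nonempty := by
            rcases Finset.eq_empty_or_nonempty N with h0 | h0
            · rw [h0] at h; simp at h
            · exact h0
          have hPc : IsProblem N {j} (fun i _ => x i) :=
            ⟨hN, ⟨j, mem_singleton_self j⟩, fun j' _ => h⟩
          exact (hI N {j} _ hPc).2
        · have : ((∑ i ∈ N, x i : ℕ) : ℝ) = ∑ i ∈ N, (x i : ℝ) := by push_cast; rfl
          rw [← this]; exact_mod_cast h
      · exact one_pos
    · intro N M t hP i hi
      exact main_formula hI hAdd hHom N M t hP i hi
  · rintro ⟨ω, hω, hform⟩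
    constructor
    · intro N M M₁ M₂ t t₁ t₂ hP hP1 hP2 hM hd ha1 ha2 i hi
      rw [hform N M t hP i hi, hform N M₁ t₁ hP1 i hi, hform N M₂ t₂ hP2 i hi,
        hM, Finset.sum_union hd]
      congr 1
      · apply Finset.sum_congr rfl
        intro j hj
        have hprof : prof N t j = prof N t₁ j := by
          funext i'
          unfold prof
          split_ifs with h'
          · exact ha1 i' h' j hj
          · rfl
        rw [hprof, ha1 i hi j hj]
      · apply Finset.sum_congr rfl
        intro j hj
        have hprof : prof N t j = prof N t₂ j := by
          funext i'
          unfold prof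
          split_ifs with h'
          · exact ha2 i' h' j hj
          · rfl
        rw [hprof, ha2 i hi j hj]
    · intro N M t hP i hi i' hi' lam hlam hprop
      rw [hform N M t hP i hi, hform N M t hP i' hi', Finset.mul_sum]
      apply Finset.sum_congr rfl
      intro j hj
      rw [hprop j hj]
      ring
end

section
/- An index satisfies additivity and null artists if and only if it is a decomposable index. -/
open Finset

/-- The value of `I` on a single-user problem depends only on that user's column on `N`. -/
lemma singleton_col (I : SIndex) (hAdd : AdditiveIndex I)
    (N : Finset ℕ) (hN : N.Nonempty) (j : ℕ) (t t' : ℕ → ℕ → ℕ)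
    (hpos : 0 < ∑ i ∈ N, t i j) (heq : ∀ i ∈ N, t i j = t' i j) :
    ∀ i ∈ N, I N {j} t i = I N {j} t' i := by
  classical
  intro i hi
  set k := j + 1 with hk
  have hkj : k ≠ j := Nat.succ_ne_self j
  set u : ℕ → ℕ → ℕ := fun _ _ => 1 with hu
  set s : ℕ → ℕ → ℕ := fun i j' => if j' = j then t i j else 1 with hs
  have hpos' : 0 < ∑ i ∈ N, t' i j := by
    rw [← Finset.sum_congr rfl heq]; exact hpos
  have hPu : IsProblem N {k} u := by
    refine ⟨hN, Finset.singleton_nonempty k, fun j' _ => ?_⟩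
    simpa [hu] using Finset.card_pos.2 hN
  have hPt : IsProblem N {j} t := by
    refine ⟨hN, Finset.singleton_nonempty j, fun j' hj' => ?_⟩
    rw [Finset.mem_singleton] at hj'; subst hj'; exact hpos
  have hPt' : IsProblem N {j} t' := by
    refine ⟨hN, Finset.singleton_nonempty j, fun j' hj' => ?_⟩
    rw [Finset.mem_singleton] at hj'; subst hj'; exact hpos'
  have hPs : IsProblem N ({j, k} : Finset ℕ) s := by
    refine ⟨hN, ⟨j, by simp⟩, fun j' hj' => ?_⟩
    rcases Finset.mem_insert.1 hj' with h | h
    · subst h; simpa [hs] using hpos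
    · rw [Finset.mem_singleton] at h; subst h
      simpa [hs, hkj] using Finset.card_pos.2 hN
  have hdisj : Disjoint ({j} : Finset ℕ) {k} := by
    simp [Finset.disjoint_singleton, hkj.symm]
  have hunion : ({j, k} : Finset ℕ) = {j} ∪ {k} := by
    ext x; simp
  have h1 := hAdd N {j, k} {j} {k} s t u hPs hPt hPu hunion hdisj
    (fun i _ j' hj' => by
      rw [Finset.mem_singleton] at hj'; subst hj'; simp [hs])
    (fun i _ j' hj' => by
      rw [Finset.mem_singleton] at hj'; subst hj'; simp [hs, hu, hkj]) i hi
  have h2 := hAdd N {j, k} {j} {k} s t' u hPs hPt' hPu hunion hdisj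
    (fun i hi' j' hj' => by
      rw [Finset.mem_singleton] at hj'; subst hj'; simp [hs, heq i hi'])
    (fun i _ j' hj' => by
      rw [Finset.mem_singleton] at hj'; subst hj'; simp [hs, hu, hkj]) i hi
  have := h1.symm.trans h2
  linarith

/-- An additive index splits into single-user contributions. -/
lemma split_singles (I : SIndex) (hAdd : AdditiveIndex I)
    (N : Finset ℕ) (hN : N.Nonempty) :
    ∀ M : Finset ℕ, ∀ t, IsProblem N M t → ∀ i ∈ N,
      I N M t i = ∑ j ∈ M, I N {j} (fun i' _ => t i' j) i := by
  classical
  intro M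
  induction M using Finset.strongInduction with
  | _ M ih =>
    intro t hP i hi
    obtain ⟨j, hj⟩ := hP.2.1
    have hPj : IsProblem N {j} t := by
      refine ⟨hN, Finset.singleton_nonempty j, fun j' hj' => ?_⟩
      rw [Finset.mem_singleton] at hj'; rw [hj']; exact hP.2.2 j hj
    have hcol : I N {j} t i = I N {j} (fun i' _ => t i' j) i :=
      singleton_col I hAdd N hN j t (fun i' _ => t i' j) (hP.2.2 j hj) (fun _ _ => rfl) i hi
    by_cases hM : M = {j}
    · subst hM
      rw [Finset.sum_singleton]
      exact hcol
    · have hM2 : (M.erase j).Nonempty := by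
        rw [Finset.nonempty_iff_ne_empty]
        intro h
        rcases (Finset.erase_eq_empty_iff M j).1 h with h | h
        · exact (Finset.nonempty_iff_ne_empty.1 ⟨j, hj⟩) h
        · exact hM h
      have hPe : IsProblem N (M.erase j) t :=
        ⟨hN, hM2, fun j' hj' => hP.2.2 j' (Finset.mem_of_mem_erase hj')⟩
      have hunion : M = {j} ∪ M.erase j := by
        rw [← Finset.insert_eq, Finset.insert_erase hj]
      have hdisj : Disjoint ({j} : Finset ℕ) (M.erase j) := by
        simp [Finset.disjoint_singleton_left]
      have hadd := hAdd N M {j} (M.erase j) t t t hP hPj hPe hunion hdisj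
        (fun _ _ _ _ => rfl) (fun _ _ _ _ => rfl) i hi
      have hih := ih (M.erase j) (Finset.erase_ssubset hj) t hPe i hi
      rw [hadd, hih, hcol]
      exact Finset.add_sum_erase M (fun j => I N {j} (fun i' _ => t i' j) i) hj

/-- An index satisfies additivity and null artists if and only if
it is a decomposable index. -/
theorem statement3 (I : SIndex) (hI : IsIndex I) :
    (AdditiveIndex I ∧ NullArtists I) ↔ ∃ d, IsDecompFn d ∧ Decomposes d I := by
  classical
  constructor
  · rintro ⟨hAdd, hNull⟩
    refine ⟨fun N i j x => if h : N.Nonempty ∧ 0 < ∑ i' ∈ N, x i' then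
        I N {j} (fun i' _ => x i') i else 0, ⟨?_, ?_⟩, ?_⟩
    · intro N i hi j x _
      dsimp only
      split_ifs with h
      · obtain ⟨hN, hx⟩ := h
        exact (hI N {j} _ ⟨hN, Finset.singleton_nonempty j, fun j' _ => hx⟩).1 i hi
      · exact le_refl 0
    · intro N i hi j x _ hxi
      dsimp only
      split_ifs with h
      · obtain ⟨hN, hx⟩ := h
        exact hNull N {j} _ ⟨hN, Finset.singleton_nonempty j, fun j' _ => hx⟩ i hi
          (by simpa using hxi)
      · rfl
    · intro N M t hP i hi
      have hN := hP.1
      rw [split_singles I hAdd N hN M t hP i hi]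
      refine Finset.sum_congr rfl fun j hj => ?_
      have hsum : ∑ i' ∈ N, prof N t j i' = ∑ i' ∈ N, t i' j :=
        Finset.sum_congr rfl fun i' hi' => by simp [prof, hi']
      have hcond : N.Nonempty ∧ 0 < ∑ i' ∈ N, prof N t j i' :=
        ⟨hN, hsum ▸ hP.2.2 j hj⟩
      dsimp only
      rw [dif_pos hcond]
      exact singleton_col I hAdd N hN j (fun i' _ => t i' j) (fun i' _ => prof N t j i')
        (hP.2.2 j hj) (fun i' hi' => by show t i' j = prof N t j i'; simp [prof, hi']) i hi
  · rintro ⟨d, ⟨hd1, hd2⟩, hdec⟩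
    constructor
    · intro N M M₁ M₂ t t₁ t₂ hP hP1 hP2 hM hdisj he1 he2 i hi
      rw [hdec N M t hP i hi, hdec N M₁ t₁ hP1 i hi, hdec N M₂ t₂ hP2 i hi, hM,
        Finset.sum_union hdisj]
      congr 1
      · exact Finset.sum_congr rfl fun j hj => by
          congr 1; funext i'
          simp only [prof]
          split_ifs with h
          · exact he1 i' h j hj
          · rfl
      · exact Finset.sum_congr rfl fun j hj => by
          congr 1; funext i'
          simp only [prof]
          split_ifs with h
          · exact he2 i' h j hj
          · rfl
    · intro N M t hP i hi hzero
      rw [hdec N M t hP i hi]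
      refine Finset.sum_eq_zero fun j hj => ?_
      have hpad : PadVec N (prof N t j) := fun i' hi' => by simp [prof, hi']
      have htij : t i j = 0 := by
        have := Finset.sum_eq_zero_iff.1 hzero j hj
        exact this
      exact hd2 N i hi j _ hpad (by simp [prof, hi, htij])
end

section
/- An index satisfies additivity, null artists, and equal individual impact of similar users if and only if it is a user-independent decomposable index. -/
open Finset

lemma prof_padVec (N : Finset ℕ) (t : ℕ → ℕ → ℕ) (j : ℕ) : PadVec N (prof N t j) := by
  intro i hi; simp [prof, hi]

/-- The index of a problem does not depend on entries outside `N × M`. -/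
lemma aux_irrel (I : SIndex) (hA : AdditiveIndex I)
    {N M : Finset ℕ} {t t' : ℕ → ℕ → ℕ} (hp : IsProblem N M t)
    (hagree : ∀ i ∈ N, ∀ j ∈ M, t i j = t' i j) :
    ∀ i ∈ N, I N M t i = I N M t' i := by
  intro i hi
  obtain ⟨j₂, hj₂⟩ := Infinite.exists_notMem_finset M
  set s : ℕ → ℕ → ℕ := fun i m => if m = j₂ then 1 else t i m with hs
  have hp' : IsProblem N M t' := by
    refine ⟨hp.1, hp.2.1, fun j hj => ?_⟩
    have := hp.2.2 j hj
    rwa [Finset.sum_congr rfl (fun i hi => hagree i hi j hj)] at this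
  have hsingle : IsProblem N {j₂} s := by
    refine ⟨hp.1, ⟨j₂, mem_singleton_self j₂⟩, fun j hj => ?_⟩
    rw [mem_singleton.1 hj]
    have : ∑ i ∈ N, s i j₂ = N.card := by simp [hs]
    rw [this]; exact_mod_cast hp.1.card_pos
  have hps : IsProblem N (insert j₂ M) s := by
    refine ⟨hp.1, ⟨j₂, mem_insert_self _ _⟩, fun j hj => ?_⟩
    rcases mem_insert.1 hj with h | h
    · rw [h]; exact hsingle.2.2 j₂ (mem_singleton_self _)
    · have hne : j ≠ j₂ := fun hc => hj₂ (hc ▸ h)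
      have : ∑ i ∈ N, s i j = ∑ i ∈ N, t i j := by
        refine Finset.sum_congr rfl fun i _ => by simp [hs, hne]
      rw [this]; exact hp.2.2 j h
  have hMeq : insert j₂ M = M ∪ {j₂} := by
    rw [Finset.insert_eq, Finset.union_comm]
  have hdisj : Disjoint M ({j₂} : Finset ℕ) :=
    Finset.disjoint_singleton_right.2 hj₂
  have h1 := hA N (insert j₂ M) M {j₂} s t s hps hp hsingle hMeq hdisj
    (fun i _ j hj => by
      have hne : j ≠ j₂ := fun hc => hj₂ (hc ▸ hj)
      simp [hs, hne])
    (fun i _ j _ => rfl) i hi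
  have h2 := hA N (insert j₂ M) M {j₂} s t' s hps hp' hsingle hMeq hdisj
    (fun i hi j hj => by
      have hne : j ≠ j₂ := fun hc => hj₂ (hc ▸ hj)
      simp [hs, hne, hagree i hi j hj])
    (fun i _ j _ => rfl) i hi
  linarith

/-- Relabelling a single user leaves the index unchanged. -/
lemma aux_relabel (I : SIndex) (hA : AdditiveIndex I) (hE : EqualIndividualImpact I)
    {N : Finset ℕ} {j j' : ℕ} {t t' : ℕ → ℕ → ℕ}
    (hp : IsProblem N {j} t) (hp' : IsProblem N {j'} t')
    (hcol : ∀ i ∈ N, t i j = t' i j') (hne : j ≠ j') :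
    ∀ i ∈ N, I N {j} t i = I N {j'} t' i := by
  intro i hi
  set s : ℕ → ℕ → ℕ := fun i _ => t i j with hs
  have hcolsum : ∀ m, 0 < ∑ i' ∈ N, s i' m := fun m =>
    hp.2.2 j (mem_singleton_self _)
  have hps : IsProblem N ({j, j'} : Finset ℕ) s :=
    ⟨hp.1, ⟨j, mem_insert_self _ _⟩, fun m _ => hcolsum m⟩
  have hcard : 2 ≤ ({j, j'} : Finset ℕ).card := by
    rw [Finset.card_insert_of_notMem (by simpa using hne), Finset.card_singleton]
  have hEE := hE N {j, j'} s hps hcard i hi j (mem_insert_self _ _)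
    j' (mem_insert_of_mem (mem_singleton_self _)) rfl
  have he1 : ({j, j'} : Finset ℕ).erase j = {j'} :=
    Finset.erase_insert (by simpa using hne)
  have he2 : ({j, j'} : Finset ℕ).erase j' = {j} := by
    rw [Finset.pair_comm]
    exact Finset.erase_insert (by simpa using hne.symm)
  rw [he1, he2] at hEE
  have hpsj : IsProblem N {j} s :=
    ⟨hp.1, ⟨j, mem_singleton_self _⟩, fun m _ => hcolsum m⟩
  have hq1 : I N {j} s i = I N {j} t i :=
    aux_irrel I hA hpsj (fun i _ m hm => by rw [mem_singleton] at hm; subst hm; rfl) i hi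
  have hq2 : I N {j'} s i = I N {j'} t' i := by
    have hpsj' : IsProblem N {j'} s :=
      ⟨hp.1, ⟨j', mem_singleton_self _⟩, fun m _ => hcolsum m⟩
    exact aux_irrel I hA hpsj'
      (fun i hi m hm => by rw [mem_singleton] at hm; subst hm; exact hcol i hi) i hi
  rw [← hq1, ← hq2, ← hEE]

/-- The index of a single-user problem at artist `i` only depends on `t i j`. -/
lemma aux_single (I : SIndex) (hA : AdditiveIndex I) (hE : EqualIndividualImpact I)
    {N : Finset ℕ} {j j' : ℕ} {t t' : ℕ → ℕ → ℕ}
    (hp : IsProblem N {j} t) (hp' : IsProblem N {j'} t')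
    {i : ℕ} (hi : i ∈ N) (hij : t i j = t' i j') :
    I N {j} t i = I N {j'} t' i := by
  set j₂ : ℕ := j + j' + 1 with hj₂
  have hne : j ≠ j₂ := by omega
  have hne' : j₂ ≠ j' := by omega
  set s : ℕ → ℕ → ℕ := fun i' m => if m = j then t i' j else t' i' j' with hs
  have hcolj : ∀ i', s i' j = t i' j := fun i' => by simp [hs]
  have hcolj₂ : ∀ i', s i' j₂ = t' i' j' := fun i' => by simp [hs, hne.symm]
  have hpsj : IsProblem N {j} s :=
    ⟨hp.1, ⟨j, mem_singleton_self _⟩, fun m hm => by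
      rw [mem_singleton.1 hm, Finset.sum_congr rfl (fun i' _ => hcolj i')]
      exact hp.2.2 j (mem_singleton_self _)⟩
  have hpsj₂ : IsProblem N {j₂} s :=
    ⟨hp.1, ⟨j₂, mem_singleton_self _⟩, fun m hm => by
      rw [mem_singleton.1 hm, Finset.sum_congr rfl (fun i' _ => hcolj₂ i')]
      exact hp'.2.2 j' (mem_singleton_self _)⟩
  have hps : IsProblem N ({j, j₂} : Finset ℕ) s := by
    refine ⟨hp.1, ⟨j, mem_insert_self _ _⟩, fun m hm => ?_⟩
    rcases mem_insert.1 hm with h | h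
    · rw [h]; exact hpsj.2.2 j (mem_singleton_self _)
    · rw [mem_singleton.1 h]; exact hpsj₂.2.2 _ (mem_singleton_self _)
  have hcard : 2 ≤ ({j, j₂} : Finset ℕ).card := by
    rw [Finset.card_insert_of_notMem (by simpa using hne), Finset.card_singleton]
  have hEE := hE N {j, j₂} s hps hcard i hi j (mem_insert_self _ _)
    j₂ (mem_insert_of_mem (mem_singleton_self _))
    (by rw [hcolj, hcolj₂]; exact hij)
  have he1 : ({j, j₂} : Finset ℕ).erase j = {j₂} :=
    Finset.erase_insert (by simpa using hne)
  have he2 : ({j, j₂} : Finset ℕ).erase j₂ = {j} := by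
    rw [Finset.pair_comm]
    exact Finset.erase_insert (by simpa using hne.symm)
  rw [he1, he2] at hEE
  have hq1 : I N {j} s i = I N {j} t i :=
    aux_irrel I hA hpsj (fun i' _ m hm => by rw [mem_singleton] at hm; subst hm; exact hcolj i') i hi
  have hq2 : I N {j₂} s i = I N {j'} t' i :=
    aux_relabel I hA hE hpsj₂ hp' (fun i' _ => hcolj₂ i') hne' i hi
  rw [← hq1, ← hq2, hEE]

/-- Additivity decomposes the index into a sum over single-user problems. -/
lemma aux_sum_single (I : SIndex) (hA : AdditiveIndex I) :
    ∀ (M N : Finset ℕ) (t : ℕ → ℕ → ℕ), IsProblem N M t → ∀ i ∈ N,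
      I N M t i = ∑ j ∈ M, I N {j} t i := by
  intro M
  induction M using Finset.strongInduction with
  | _ M ih =>
    intro N t hp i hi
    obtain ⟨j, hj⟩ := hp.2.1
    by_cases hM : M = {j}
    · subst hM; simp
    · have herase : (M.erase j).Nonempty :=
        (Finset.erase_nonempty hj).2 ((Finset.nontrivial_iff_ne_singleton hj).2 hM)
      have hp1 : IsProblem N {j} t :=
        ⟨hp.1, ⟨j, mem_singleton_self _⟩, fun k hk => by
          rw [mem_singleton.1 hk]; exact hp.2.2 j hj⟩
      have hp2 : IsProblem N (M.erase j) t :=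
        ⟨hp.1, herase, fun k hk => hp.2.2 k (mem_of_mem_erase hk)⟩
      have hsplit := hA N M {j} (M.erase j) t t t hp hp1 hp2
        (by rw [← Finset.insert_eq, Finset.insert_erase hj])
        (by simp [Finset.disjoint_singleton_left])
        (fun _ _ _ _ => rfl) (fun _ _ _ _ => rfl) i hi
      rw [hsplit, ih (M.erase j) (Finset.erase_ssubset hj) N t hp2 i hi]
      exact Finset.add_sum_erase M (fun k => I N {k} t i) hj

/-- A canonical user-independent decomposition function built from `I`. -/
noncomputable def dOf (I : SIndex) : DFun :=
  fun N i _ x => if 0 < x i then I N {0} (fun i' _ => x i') i else 0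

lemma dOf_problem {N : Finset ℕ} {x : ℕ → ℕ} {i : ℕ} (hi : i ∈ N) (hx : 0 < x i) :
    IsProblem N {0} (fun i' _ => x i') := by
  refine ⟨⟨i, hi⟩, ⟨0, mem_singleton_self _⟩, fun m _ => ?_⟩
  exact lt_of_lt_of_le hx (Finset.single_le_sum (fun _ _ => Nat.zero_le _) hi)

/-- An index satisfies additivity, null artists, and equal individual impact
of similar users if and only if it is a user-independent decomposable index. -/
theorem statement4 (I : SIndex) (hI : IsIndex I) :
    (AdditiveIndex I ∧ NullArtists I ∧ EqualIndividualImpact I) ↔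
      ∃ d, IsDecompFn d ∧ UserIndependent d ∧ Decomposes d I := by
  constructor
  · rintro ⟨hA, hN, hE⟩
    refine ⟨dOf I, ⟨?_, ?_⟩, ?_, ?_⟩
    · -- nonneg
      intro N i hi j x hx
      by_cases h : 0 < x i
      · have hp := dOf_problem hi h
        simpa [dOf, h] using (hI N {0} _ hp).1 i hi
      · simp [dOf, h]
    · -- zero on null
      intro N i hi j x hx h0
      simp [dOf, h0]
    · -- user independent
      intro N i hi j j' x x' hx hx' hxx
      by_cases h : 0 < x i
      · have h' : 0 < x' i := hxx ▸ h
        have hp := dOf_problem hi h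
        have hp' := dOf_problem hi h'
        simp only [dOf, if_pos h, if_pos h']
        exact aux_single I hA hE hp hp' hi hxx
      · have h' : ¬ 0 < x' i := hxx ▸ h
        simp [dOf, h, h']
    · -- decomposes
      intro N M t hp i hi
      rw [aux_sum_single I hA M N t hp i hi]
      refine Finset.sum_congr rfl fun j hj => ?_
      have hp1 : IsProblem N {j} t :=
        ⟨hp.1, ⟨j, mem_singleton_self _⟩, fun k hk => by
          rw [mem_singleton.1 hk]; exact hp.2.2 j hj⟩
      have hprofi : prof N t j i = t i j := by simp [prof, hi]
      by_cases h : 0 < t i j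
      · have hpos : 0 < prof N t j i := hprofi ▸ h
        have hpc : IsProblem N {0} (fun i' _ => prof N t j i') := dOf_problem hi hpos
        have := aux_single I hA hE hp1 hpc hi (by simp [hprofi])
        simp only [dOf, if_pos hpos]
        exact this
      · have h0 : t i j = 0 := Nat.eq_zero_of_not_pos h
        have : I N {j} t i = 0 := by
          refine hN N {j} t hp1 i hi ?_
          simp [h0]
        rw [this]
        simp [dOf, hprofi, h0]
  · rintro ⟨d, ⟨hd0, hdnull⟩, hUI, hDec⟩
    refine ⟨?_, ?_, ?_⟩
    · -- additivity
      intro N M M₁ M₂ t t₁ t₂ hp hp1 hp2 hMeq hdisj hag1 hag2 i hi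
      rw [hDec N M t hp i hi, hDec N M₁ t₁ hp1 i hi, hDec N M₂ t₂ hp2 i hi,
        hMeq, Finset.sum_union hdisj]
      congr 1
      · refine Finset.sum_congr rfl fun j hj => ?_
        exact hUI N i hi j j _ _ (prof_padVec N t j) (prof_padVec N t₁ j)
          (by simp [prof, hi, hag1 i hi j hj])
      · refine Finset.sum_congr rfl fun j hj => ?_
        exact hUI N i hi j j _ _ (prof_padVec N t j) (prof_padVec N t₂ j)
          (by simp [prof, hi, hag2 i hi j hj])
    · -- null artists
      intro N M t hp i hi hnull
      rw [hDec N M t hp i hi]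
      refine Finset.sum_eq_zero fun j hj => ?_
      have : t i j = 0 := by
        have := Finset.sum_eq_zero_iff.1 hnull j hj
        exact this
      exact hdnull N i hi j _ (prof_padVec N t j) (by simp [prof, hi, this])
    · -- equal individual impact
      intro N M t hp hcard i hi j hj j' hj' hjj'
      have hpe : ∀ k ∈ M, IsProblem N (M.erase k) t := fun k hk =>
        ⟨hp.1,
          (Finset.erase_nonempty hk).2 ((Finset.nontrivial_iff_ne_singleton hk).2
            (fun hMk => by rw [hMk, Finset.card_singleton] at hcard; omega)),
          fun m hm => hp.2.2 m (mem_of_mem_erase hm)⟩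
      rw [hDec N (M.erase j) t (hpe j hj) i hi, hDec N (M.erase j') t (hpe j' hj') i hi,
        Finset.sum_erase_eq_sub hj, Finset.sum_erase_eq_sub hj']
      congr 1
      exact hUI N i hi j j' _ _ (prof_padVec N t j) (prof_padVec N t j')
        (by simp [prof, hi, hjj'])
end

section
/- No decomposable index satisfies both equal individual impact of similar users and equal global impact of users. -/
open Finset

/-- Auxiliary artist set for statement 7. -/
def N0 : Finset ℕ := {1, 2}

/-- Auxiliary user set for statement 7. -/
def M0 : Finset ℕ := {1, 2, 3}

/-- Auxiliary stream matrix for statement 7. -/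
def t0 : ℕ → ℕ → ℕ := fun i j =>
  if i = j ∨ (j = 3 ∧ (i = 1 ∨ i = 2)) then 1 else 0

lemma padvec0 (j : ℕ) : PadVec N0 (prof N0 t0 j) := by
  intro i hi; simp [prof, hi]

/-- No decomposable index satisfies both equal individual impact of similar
users and equal global impact of users. -/
theorem statement7 :
    ¬ ∃ I : SIndex, IsDecomposable I ∧ EqualIndividualImpact I ∧ EqualGlobalImpact I := by
  rintro ⟨I, ⟨hIdx, d, ⟨hd0, hdz⟩, hdec⟩, hEII, hEGI⟩
  have hP : IsProblem N0 M0 t0 := by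
    refine ⟨⟨1, by decide⟩, ⟨1, by decide⟩, by decide⟩
  have hP1 : IsProblem N0 (M0.erase 1) t0 := by
    refine ⟨⟨1, by decide⟩, ⟨2, by decide⟩, by decide⟩
  have hP2 : IsProblem N0 (M0.erase 2) t0 := by
    refine ⟨⟨1, by decide⟩, ⟨1, by decide⟩, by decide⟩
  have hP3 : IsProblem N0 (M0.erase 3) t0 := by
    refine ⟨⟨1, by decide⟩, ⟨1, by decide⟩, by decide⟩
  have hPs : IsProblem N0 {1} t0 := by
    refine ⟨⟨1, by decide⟩, ⟨1, by decide⟩, by decide⟩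
  -- abbreviations
  set D : ℕ → ℕ → ℝ := fun i j => d N0 i j (prof N0 t0 j) with hD
  have hcN : ∀ (M : Finset ℕ), IsProblem N0 M t0 →
      ∑ i ∈ N0, I N0 M t0 i = ∑ j ∈ M, (D 1 j + D 2 j) := by
    intro M hM
    have h1 : ∑ i ∈ N0, I N0 M t0 i = ∑ i ∈ N0, ∑ j ∈ M, d N0 i j (prof N0 t0 j) :=
      Finset.sum_congr rfl fun i hi => hdec N0 M t0 hM i hi
    rw [h1, Finset.sum_comm]
    refine Finset.sum_congr rfl fun j _ => ?_
    show ∑ i ∈ ({1, 2} : Finset ℕ), d N0 i j (prof N0 t0 j) = _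
    rw [Finset.sum_pair (by norm_num)]
  -- erase sets
  have he1 : M0.erase 1 = ({2, 3} : Finset ℕ) := by decide
  have he2 : M0.erase 2 = ({1, 3} : Finset ℕ) := by decide
  have he3 : M0.erase 3 = ({1, 2} : Finset ℕ) := by decide
  -- Equal global impact
  have e13 := hEGI N0 M0 t0 hP (by decide) 1 (by decide) 3 (by decide)
  have e23 := hEGI N0 M0 t0 hP (by decide) 2 (by decide) 3 (by decide)
  rw [hcN _ hP1, hcN _ hP3, he1, he3, Finset.sum_pair (by norm_num),
    Finset.sum_pair (by norm_num)] at e13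
  rw [hcN _ hP2, hcN _ hP3, he2, he3, Finset.sum_pair (by norm_num),
    Finset.sum_pair (by norm_num)] at e23
  -- Equal individual impact
  have a13 := hEII N0 M0 t0 hP (by decide) 1 (by decide) 1 (by decide) 3 (by decide)
    (by decide)
  have a23 := hEII N0 M0 t0 hP (by decide) 2 (by decide) 2 (by decide) 3 (by decide)
    (by decide)
  rw [hdec N0 _ t0 hP1 1 (by decide), hdec N0 _ t0 hP3 1 (by decide), he1, he3,
    Finset.sum_pair (by norm_num), Finset.sum_pair (by norm_num)] at a13
  rw [hdec N0 _ t0 hP2 2 (by decide), hdec N0 _ t0 hP3 2 (by decide), he2, he3,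
    Finset.sum_pair (by norm_num), Finset.sum_pair (by norm_num)] at a23
  -- zero entries
  have hz1 : D 2 1 = 0 :=
    hdz N0 2 (by decide) 1 (prof N0 t0 1) (padvec0 1) (by decide)
  have hz2 : D 1 2 = 0 :=
    hdz N0 1 (by decide) 2 (prof N0 t0 2) (padvec0 2) (by decide)
  -- positivity
  have hpos : 0 < ∑ i ∈ N0, I N0 {1} t0 i := (hIdx N0 {1} t0 hPs).2
  rw [hcN _ hPs, Finset.sum_singleton] at hpos
  -- a13 : D 1 2 + D 1 3 = D 1 1 + D 1 2, a23 : D 2 1 + D 2 3 = D 2 1 + D 2 2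
  -- e13 : (D 1 2 + D 2 2) + (D 1 3 + D 2 3) = (D 1 1 + D 2 1) + (D 1 2 + D 2 2)
  -- e23 : (D 1 1 + D 2 1) + (D 1 3 + D 2 3) = (D 1 1 + D 2 1) + (D 1 2 + D 2 2)
  linarith
end

section
/- No index satisfies additivity, null artists, equal individual impact of similar users, and equal global impact of users simultaneously. -/
open Finset

/-- Counterexample stream matrix: artist 1 ↦ streamed by users 1 and 3,
artist 2 ↦ streamed by users 2 and 3 (one stream each), everything else 1. -/
private def tX : ℕ → ℕ → ℕ := fun i j =>
  if (i = 1 ∧ j = 2) ∨ (i = 2 ∧ j = 1) then 0 else 1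

private lemma tX_problem (M : Finset ℕ) (hM : M.Nonempty) :
    IsProblem {1, 2} M tX := by
  refine ⟨by decide, hM, ?_⟩
  intro j _
  simp only [Finset.sum_pair (by norm_num : (1 : ℕ) ≠ 2)]
  unfold tX
  split_ifs <;> omega

/-- No index satisfies additivity, null artists, equal individual impact of
similar users, and equal global impact of users simultaneously. -/
theorem statement11 :
    ¬ ∃ I : SIndex, IsIndex I ∧ AdditiveIndex I ∧ NullArtists I ∧
      EqualIndividualImpact I ∧ EqualGlobalImpact I := by
  rintro ⟨I, hIdx, -, hNull, hEII, hEGI⟩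
  -- Single-user indices, one subproblem per user, all on the fixed matrix `tX`.
  -- Equal individual impact on M = {1,3} for artist 1 (users 1 and 3 agree on artist 1):
  have h1 := hEII {1, 2} {1, 3} tX (tX_problem _ ⟨1, by decide⟩) (by decide)
    1 (by decide) 1 (by decide) 3 (by decide) (by decide)
  -- Equal individual impact on M = {2,3} for artist 2 (users 2 and 3 agree on artist 2):
  have h2 := hEII {1, 2} {2, 3} tX (tX_problem _ ⟨2, by decide⟩) (by decide)
    2 (by decide) 2 (by decide) 3 (by decide) (by decide)
  -- Equal global impact on M = {1,2} and M = {2,3}: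
  have g1 := hEGI {1, 2} {1, 2} tX (tX_problem _ ⟨1, by decide⟩) (by decide)
    1 (by decide) 2 (by decide)
  have g2 := hEGI {1, 2} {2, 3} tX (tX_problem _ ⟨2, by decide⟩) (by decide)
    2 (by decide) 3 (by decide)
  -- Null artists on the single-user problems {1} and {2}:
  have n1 := hNull {1, 2} {1} tX (tX_problem _ ⟨1, by decide⟩) 2 (by decide) (by decide)
  have n2 := hNull {1, 2} {2} tX (tX_problem _ ⟨2, by decide⟩) 1 (by decide) (by decide)
  -- Positivity on the single-user problem {2}:
  have pos := (hIdx {1, 2} {2} tX (tX_problem _ ⟨2, by decide⟩)).2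
  -- Rewrite erasures to explicit singletons.
  have e1 : ({1, 3} : Finset ℕ).erase 1 = {3} := by decide
  have e2 : ({1, 3} : Finset ℕ).erase 3 = {1} := by decide
  have e3 : ({2, 3} : Finset ℕ).erase 2 = {3} := by decide
  have e4 : ({2, 3} : Finset ℕ).erase 3 = {2} := by decide
  have e5 : ({1, 2} : Finset ℕ).erase 1 = {2} := by decide
  have e6 : ({1, 2} : Finset ℕ).erase 2 = {1} := by decide
  rw [e1, e2] at h1
  rw [e3, e4] at h2
  rw [e5, e6] at g1
  rw [e3, e4] at g2
  simp only [Finset.sum_pair (by norm_num : (1 : ℕ) ≠ 2)] at g1 g2 pos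
  linarith
end
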